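/- There exists an absolute constant c > 0 with the following property. Let R ≥ 1, 0 < θ ≤ 1/100, and let ξ, η, z, ξ₀ ∈ ℝ² and τ, μ, s ∈ ℝ satisfy R ≤ |η| ≤ 2R, R ≤ |z| ≤ 2R, |η − z| ≤ 4Rθ, and |ξ − ξ₀| ≤ Rθ. Define L₁ = τ − μ − |ξ − η + z|², L₂ = τ − |ξ|², L₃ = μ − s − |η|², L₄ = s − |z|². If |ξ₀| ≤ cR/θ, then max(|L₁|, |L₂|, |L₃|, |L₄|) ≥ cR². -/
import Mathlib


noncomputable section

/-- Euclidean norm on `ℝ²` (realized as `ℝ × ℝ`). -/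
def nrm2 (a : ℝ × ℝ) : ℝ := Real.sqrt (a.1 ^ 2 + a.2 ^ 2)

lemma nrm2_nonneg (a : ℝ × ℝ) : 0 ≤ nrm2 a := Real.sqrt_nonneg _

lemma nrm2_sq (a : ℝ × ℝ) : nrm2 a ^ 2 = a.1 ^ 2 + a.2 ^ 2 :=
  Real.sq_sqrt (by positivity)

lemma cs (a b : ℝ × ℝ) : |a.1 * b.1 + a.2 * b.2| ≤ nrm2 a * nrm2 b := by
  have h : (a.1 * b.1 + a.2 * b.2) ^ 2 ≤ (nrm2 a * nrm2 b) ^ 2 := by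
    rw [mul_pow, nrm2_sq, nrm2_sq]
    nlinarith [sq_nonneg (a.1 * b.2 - a.2 * b.1)]
  calc |a.1 * b.1 + a.2 * b.2| = Real.sqrt ((a.1 * b.1 + a.2 * b.2) ^ 2) :=
        (Real.sqrt_sq_eq_abs _).symm
    _ ≤ Real.sqrt ((nrm2 a * nrm2 b) ^ 2) := Real.sqrt_le_sqrt h
    _ = nrm2 a * nrm2 b := Real.sqrt_sq (mul_nonneg (nrm2_nonneg a) (nrm2_nonneg b))

/-- There is an absolute constant `c > 0` with the following property.
Let `R ≥ 1`, `0 < θ ≤ 1/100`, and let `ξ, η, z, ξ₀ ∈ ℝ²` and `τ, μ, s ∈ ℝ` satisfy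
`R ≤ |η| ≤ 2R`, `R ≤ |z| ≤ 2R`, `|η − z| ≤ 4Rθ`, and `|ξ − ξ₀| ≤ Rθ`.  Set
`L₁ = τ − μ − |ξ − η + z|²`, `L₂ = τ − |ξ|²`, `L₃ = μ − s − |η|²`, `L₄ = s − |z|²`.
If `|ξ₀| ≤ cR/θ` then `max(|L₁|,|L₂|,|L₃|,|L₄|) ≥ cR²`. -/
theorem statement19 :
    ∃ c : ℝ, 0 < c ∧
      ∀ (R θ : ℝ) (ξ η z ξ₀ : ℝ × ℝ) (τ μ s : ℝ),
        1 ≤ R → 0 < θ → θ ≤ 1/100 →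
        R ≤ nrm2 η → nrm2 η ≤ 2 * R →
        R ≤ nrm2 z → nrm2 z ≤ 2 * R →
        nrm2 (η - z) ≤ 4 * R * θ →
        nrm2 (ξ - ξ₀) ≤ R * θ →
        nrm2 ξ₀ ≤ c * R / θ →
        c * R ^ 2 ≤
          max (|τ - μ - nrm2 (ξ - η + z) ^ 2|)
            (max (|τ - nrm2 ξ ^ 2|)
              (max (|μ - s - nrm2 η ^ 2|) (|s - nrm2 z ^ 2|))) := by
  refine ⟨1/8, by norm_num, ?_⟩
  intro R θ ξ η z ξ₀ τ μ s hR hθ hθ' hη1 hη2 hz1 hz2 hηz hξξ₀ hξ₀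
  have hR0 : (0:ℝ) < R := by linarith
  -- Cauchy–Schwarz bounds for the two dot products
  have hd1 := cs ξ₀ (η - z)
  have hd2 := cs (ξ - ξ₀) (η - z)
  have b1 : nrm2 ξ₀ * nrm2 (η - z) ≤ 1/2 * R ^ 2 := by
    have h := mul_le_mul hξ₀ hηz (nrm2_nonneg _) (by positivity)
    have e : (1/8 * R / θ) * (4 * R * θ) = 1/2 * R ^ 2 := by
      field_simp; ring
    linarith
  have b2 : nrm2 (ξ - ξ₀) * nrm2 (η - z) ≤ 4 * R ^ 2 * θ ^ 2 := by
    have h := mul_le_mul hξξ₀ hηz (nrm2_nonneg _) (by positivity)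
    nlinarith
  have hθsq : θ ^ 2 ≤ (1/100) ^ 2 := by nlinarith
  -- lower bounds on |η|², |z|²
  have hη2' : R ^ 2 ≤ nrm2 η ^ 2 := by nlinarith [nrm2_nonneg η]
  have hz2' : R ^ 2 ≤ nrm2 z ^ 2 := by nlinarith [nrm2_nonneg z]
  -- abbreviations
  set L₁ := τ - μ - nrm2 (ξ - η + z) ^ 2 with hL1
  set L₂ := τ - nrm2 ξ ^ 2 with hL2
  set L₃ := μ - s - nrm2 η ^ 2 with hL3
  set L₄ := s - nrm2 z ^ 2 with hL4
  set M := max (|L₁|) (max (|L₂|) (max (|L₃|) (|L₄|))) with hM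
  have m1 : |L₁| ≤ M := le_max_left _ _
  have m2 : |L₂| ≤ M := le_trans (le_max_left _ _) (le_max_right _ _)
  have m3 : |L₃| ≤ M := le_trans (le_trans (le_max_left _ _) (le_max_right _ _)) (le_max_right _ _)
  have m4 : |L₄| ≤ M := le_trans (le_trans (le_max_right _ _) (le_max_right _ _)) (le_max_right _ _)
  -- key algebraic identity
  have hu : nrm2 (ξ - η + z) ^ 2 - nrm2 ξ ^ 2
      = ((η - z).1 ^ 2 + (η - z).2 ^ 2)
        - 2 * ((ξ₀.1 * (η - z).1 + ξ₀.2 * (η - z).2)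
              + ((ξ - ξ₀).1 * (η - z).1 + (ξ - ξ₀).2 * (η - z).2)) := by
    rw [nrm2_sq, nrm2_sq]
    simp only [Prod.fst_add, Prod.snd_add, Prod.fst_sub, Prod.snd_sub]
    ring
  have hwsq : 0 ≤ (η - z).1 ^ 2 + (η - z).2 ^ 2 := by positivity
  have habs1 : ξ₀.1 * (η - z).1 + ξ₀.2 * (η - z).2 ≤ nrm2 ξ₀ * nrm2 (η - z) := by
    have := le_abs_self (ξ₀.1 * (η - z).1 + ξ₀.2 * (η - z).2)
    linarith
  have habs2 : (ξ - ξ₀).1 * (η - z).1 + (ξ - ξ₀).2 * (η - z).2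
      ≤ nrm2 (ξ - ξ₀) * nrm2 (η - z) := by
    have := le_abs_self ((ξ - ξ₀).1 * (η - z).1 + (ξ - ξ₀).2 * (η - z).2)
    linarith
  -- combine: -(L₁ - L₂ + L₃ + L₄) = |η|² + |z|² + (|ξ-η+z|² - |ξ|²)
  have hS : -(L₁ - L₂ + L₃ + L₄)
      = nrm2 η ^ 2 + nrm2 z ^ 2 + (nrm2 (ξ - η + z) ^ 2 - nrm2 ξ ^ 2) := by
    rw [hL1, hL2, hL3, hL4]; ring
  have h1 := neg_abs_le L₁
  have h2 := le_abs_self L₂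
  have h3 := neg_abs_le L₃
  have h4 := neg_abs_le L₄
  have hRθ : R ^ 2 * θ ^ 2 ≤ R ^ 2 * (1/100) ^ 2 :=
    mul_le_mul_of_nonneg_left hθsq (sq_nonneg R)
  have hRsq : (0:ℝ) ≤ R ^ 2 := sq_nonneg R
  linarith
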